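/- In the numerical semigroup ring setting, let m > n > 0 be integers with ℓ+1 ≤ m ≤ e−1. Then b_m ≤ bm − n holds if and only if a_1^m ∈ q n^n. -/

import Mathlib

open Polynomial IsLocalRing

set_option synthInstance.maxHeartbeats 1000000
set_option maxHeartbeats 1000000

noncomputable section

/-- The length `ℓ_A(M)` of an `A`-module `M`, defined as the Krull dimension of its
lattice of submodules. -/
def moduleLength (A : Type*) [CommRing A] (M : Type*) [AddCommGroup M] [Module A M] : ℕ∞ :=
  WithBot.unbotD 0 (Order.krullDim (Submodule A M))

/-- `ℓ_A(M/N)` for ideals `N ⊆ M` of `A`. -/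
def qlen {A : Type*} [CommRing A] (M N : Ideal A) : ℕ∞ :=
  moduleLength A (↥M ⧸ (Submodule.comap M.subtype N))

/-- `ℓ_A(A/J)`. -/
def cyclen {A : Type*} [CommRing A] (J : Ideal A) : ℕ∞ :=
  moduleLength A (A ⧸ J)

/-- The depth of `M` with respect to the ideal `J`: the supremum of the lengths of
`M`-regular sequences consisting of elements of `J`. -/
def seqDepth {A : Type*} [CommRing A] (J : Ideal A) (M : Type*) [AddCommGroup M]
    [Module A M] : ℕ∞ :=
  sSup {n : ℕ∞ | ∃ rs : List A, (∀ r ∈ rs, r ∈ J) ∧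
    RingTheory.Sequence.IsRegular M rs ∧ (rs.length : ℕ∞) = n}

/-- The associated graded ring `G(I) = ⊕_{n ≥ 0} Iⁿ/Iⁿ⁺¹`, realized as `R(I)/I·R(I)`
where `R(I)` is the Rees algebra of `I`. -/
abbrev agr {A : Type*} [CommRing A] (I : Ideal A) : Type _ :=
  (reesAlgebra I) ⧸ (Ideal.map (algebraMap A (reesAlgebra I)) I)

/-- The irrelevant ideal `R(I)_+` of the Rees algebra, generated by the degree-one
elements `a·t`, `a ∈ I`. -/
def reesPlus {A : Type*} [CommRing A] (I : Ideal A) : Ideal (reesAlgebra I) :=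
  Ideal.span {x | ∃ a ∈ I, (x : A[X]) = Polynomial.monomial 1 a}

/-- The unique graded maximal ideal `m/I ⊕ ⊕_{n ≥ 1} Iⁿ/Iⁿ⁺¹` of the associated graded
ring `G(I)`. -/
def gMax {A : Type*} [CommRing A] (m I : Ideal A) : Ideal (agr I) :=
  Ideal.map (Ideal.Quotient.mk _) (Ideal.map (algebraMap A (reesAlgebra I)) m ⊔ reesPlus I)

/-- The index of nilpotency `n_I = min {n ≥ 0 | I^{n+1} ⊆ Q}`. -/
def nidx {A : Type*} [CommRing A] (I Q : Ideal A) : ℕ := sInf {n | I ^ (n + 1) ≤ Q}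

/-- The reduction number `r_I = min {n ≥ 0 | I^{n+1} = Q·Iⁿ}`. -/
def rnum {A : Type*} [CommRing A] (I Q : Ideal A) : ℕ := sInf {n | I ^ (n + 1) = Q * I ^ n}

/-- `I` is stretched with respect to `Q`: `Q ∩ I² = Q·I` and `ℓ_A((I²+Q)/(I³+Q)) = 1`. -/
def IsStretched {A : Type*} [CommRing A] (I Q : Ideal A) : Prop :=
  Q ⊓ I ^ 2 = Q * I ∧ qlen (I ^ 2 ⊔ Q) (I ^ 3 ⊔ Q) = 1

/-- The associated graded ring `G(I)` is Cohen-Macaulay: its depth with respect to the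
graded maximal ideal equals its Krull dimension. -/
def agrCM {A : Type*} [CommRing A] (m I : Ideal A) : Prop :=
  (seqDepth (A := agr I) (gMax m I) (agr I) : WithBot ℕ∞) = ringKrullDim (agr I)


/-!
Every element of `C` is a `k`-linear combination of monomials `u^h` with `h ∈ H`, so `q 𝔫ⁿ`
lies in the `k`-span of the monomials `u^(e + g₁ + ⋯ + g_t)` with `t ≥ n` and every `gᵢ` a
generator exponent; hence `a₁^m ∈ q 𝔫ⁿ` forces `(be+1)m = e + g₁ + ⋯ + g_t` with `t ≥ n`.
Write `gᵢ = Kᵢ e + Rᵢ` with `Rᵢ < e` and put `c = ⌈b/2⌉`. Every generator has weight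
`Kᵢ - c Rᵢ ≥ 1`, which forces `Σ Rᵢ = m` and `1 + Σ Kᵢ = bm`. Some `a_j` with `j ≤ m` must
occur, for `e` and `a₁` alone have `Kᵢ ≥ b Rᵢ`; the weight `b_j - c j` of `a_j` is
nonincreasing in `j`, hence at least `b_m - c m`, and summing weights gives `t ≤ bm - b_m`.
Conversely `a₁^m = a^(bm - b_m) a_m` when `b_m ≤ bm - n`.
-/

open scoped Pointwise

section MonomialSpan

variable (R : Type*) [CommSemiring R]

def monomialSpan (D : Set ℕ) : Submodule R R[X] :=
  Submodule.span R ((X ^ ·) '' D)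

variable {R}

theorem X_pow_mem_monomialSpan {D : Set ℕ} {d : ℕ} (hd : d ∈ D) :
    (X : R[X]) ^ d ∈ monomialSpan R D :=
  Submodule.subset_span ⟨d, hd, rfl⟩

theorem monomialSpan_mono {D D' : Set ℕ} (h : D ⊆ D') : monomialSpan R D ≤ monomialSpan R D' :=
  Submodule.span_mono (Set.image_mono h)

theorem mul_mem_monomialSpan {D D' : Set ℕ} {p q : R[X]} (hp : p ∈ monomialSpan R D)
    (hq : q ∈ monomialSpan R D') : p * q ∈ monomialSpan R (D + D') := by
  have hle : monomialSpan R D * monomialSpan R D' ≤ monomialSpan R (D + D') := by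
    rw [monomialSpan, monomialSpan, Submodule.span_mul_span]
    refine Submodule.span_mono ?_
    rintro _ ⟨_, ⟨d, hd, rfl⟩, _, ⟨d', hd', rfl⟩, rfl⟩
    exact ⟨d + d', Set.add_mem_add hd hd', pow_add _ _ _⟩
  exact hle (Submodule.mul_mem_mul hp hq)

theorem X_pow_mem_monomialSpan_iff [Nontrivial R] {D : Set ℕ} {d : ℕ} :
    (X : R[X]) ^ d ∈ monomialSpan R D ↔ d ∈ D := by
  refine ⟨fun h => ?_, X_pow_mem_monomialSpan⟩
  by_contra hd
  have hle : monomialSpan R D ≤ LinearMap.ker (lcoeff R d) := by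
    refine Submodule.span_le.mpr ?_
    rintro _ ⟨d', hd', rfl⟩
    simp [coeff_X_pow, show d ≠ d' by rintro rfl; exact hd hd']
  simpa using hle h

theorem mem_monomialSpan_of_mem_adjoin {G : Set ℕ} {p : R[X]}
    (hp : p ∈ Algebra.adjoin R ((X ^ ·) '' G)) :
    p ∈ monomialSpan R (AddSubmonoid.closure G) := by
  let H := AddSubmonoid.closure G
  have hmul : ∀ p q, p ∈ monomialSpan R H → q ∈ monomialSpan R H → p * q ∈ monomialSpan R H :=
    fun p q hp hq => monomialSpan_mono H.coe_add_self_eq.le (mul_mem_monomialSpan hp hq)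
  have hone : (1 : R[X]) ∈ monomialSpan R H := by
    simpa using X_pow_mem_monomialSpan (R := R) H.zero_mem
  refine Algebra.adjoin_le (S := (monomialSpan R H).toSubalgebra hone hmul) ?_ hp
  rintro _ ⟨g, hg, rfl⟩
  exact X_pow_mem_monomialSpan (AddSubmonoid.subset_closure hg)

end MonomialSpan

section SumsOfAtLeast

variable {M : Type*} [AddCommMonoid M] {G : Set M}

def sumsOfAtLeast (G : Set M) (t : ℕ) : Set M :=
  {x | ∃ s : Multiset M, (∀ g ∈ s, g ∈ G) ∧ t ≤ Multiset.card s ∧ s.sum = x}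

theorem closure_subset_sumsOfAtLeast_zero : (AddSubmonoid.closure G : Set M) ⊆ sumsOfAtLeast G 0 :=
  fun _ hx => by
    obtain ⟨s, hsG, rfl⟩ := AddSubmonoid.exists_multiset_of_mem_closure hx
    exact ⟨s, hsG, Nat.zero_le _, rfl⟩

theorem subset_sumsOfAtLeast_one : G ⊆ sumsOfAtLeast G 1 :=
  fun g hg => ⟨{g}, by simpa using hg, by simp, by simp⟩

theorem sumsOfAtLeast_add_subset (t t' : ℕ) :
    sumsOfAtLeast G t + sumsOfAtLeast G t' ⊆ sumsOfAtLeast G (t + t') := by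
  rintro _ ⟨_, ⟨s, hsG, hst, rfl⟩, _, ⟨s', hsG', hst', rfl⟩, rfl⟩
  refine ⟨s + s', fun g hg => ?_, by simp; omega, Multiset.sum_add s s'⟩
  rcases Multiset.mem_add.1 hg with hg | hg
  exacts [hsG g hg, hsG' g hg]

end SumsOfAtLeast

section MonomialSubalgebra

variable {R : Type*} [CommSemiring R] {C : Subalgebra R R[X]}

theorem coe_mem_monomialSpan_of_mem_span {S : Set C} {E D : Set ℕ}
    (hC : ∀ x : C, (x : R[X]) ∈ monomialSpan R E) (hS : ∀ s ∈ S, (s : R[X]) ∈ monomialSpan R D)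
    (hED : E + D ⊆ D) {x : C} (hx : x ∈ Ideal.span S) : (x : R[X]) ∈ monomialSpan R D := by
  induction hx using Submodule.span_induction with
  | mem s hs => exact hS s hs
  | zero => exact zero_mem _
  | add y z _ _ hy hz => exact add_mem hy hz
  | smul r y _ hy => exact monomialSpan_mono hED (mul_mem_monomialSpan (hC r) hy)

theorem coe_mem_monomialSpan_of_mem_mul {I J : Ideal C} {D D' : Set ℕ}
    (hI : ∀ x ∈ I, (x : R[X]) ∈ monomialSpan R D) (hJ : ∀ y ∈ J, (y : R[X]) ∈ monomialSpan R D')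
    {z : C} (hz : z ∈ I * J) : (z : R[X]) ∈ monomialSpan R (D + D') :=
  Submodule.mul_induction_on hz (fun x hx y hy => mul_mem_monomialSpan (hI x hx) (hJ y hy))
    (fun _ _ => add_mem)

theorem coe_mem_monomialSpan_of_mem_span_pow {G : Set ℕ}
    (hC : C ≤ Algebra.adjoin R ((X ^ ·) '' G)) {S : Set C}
    (hS : ∀ s ∈ S, ∃ g ∈ G, (s : R[X]) = X ^ g) (t : ℕ) {x : C} (hx : x ∈ Ideal.span S ^ t) :
    (x : R[X]) ∈ monomialSpan R (sumsOfAtLeast G t) := by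
  have hC0 : ∀ y : C, (y : R[X]) ∈ monomialSpan R (sumsOfAtLeast G 0) := fun y =>
    monomialSpan_mono closure_subset_sumsOfAtLeast_zero
      (mem_monomialSpan_of_mem_adjoin (hC y.2))
  have hspan : ∀ y ∈ Ideal.span S, (y : R[X]) ∈ monomialSpan R (sumsOfAtLeast G 1) := by
    refine fun y hy => coe_mem_monomialSpan_of_mem_span hC0 (fun s hs => ?_)
      (by simpa using sumsOfAtLeast_add_subset (G := G) 0 1) hy
    obtain ⟨g, hg, hsg⟩ := hS s hs
    exact hsg ▸ X_pow_mem_monomialSpan (subset_sumsOfAtLeast_one hg)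
  induction t generalizing x with
  | zero => exact hC0 x
  | succ t ih =>
    rw [pow_succ] at hx
    exact monomialSpan_mono (sumsOfAtLeast_add_subset t 1)
      (coe_mem_monomialSpan_of_mem_mul (fun y hy => ih hy) hspan hx)

theorem exists_multiset_of_mem_span_singleton_mul_span_pow [Nontrivial R] {G : Set ℕ}
    (hC : C ≤ Algebra.adjoin R ((X ^ ·) '' G)) {S : Set C}
    (hS : ∀ s ∈ S, ∃ g ∈ G, (s : R[X]) = X ^ g) {a y : C} {e d t : ℕ}
    (ha : (a : R[X]) = X ^ e) (hy : (y : R[X]) = X ^ d)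
    (h : y ∈ Ideal.span {a} * Ideal.span S ^ t) :
    ∃ s : Multiset ℕ, (∀ g ∈ s, g ∈ G) ∧ t ≤ Multiset.card s ∧ e + s.sum = d := by
  obtain ⟨z, hz, rfl⟩ := Ideal.mem_span_singleton_mul.1 h
  have hd : (X : R[X]) ^ d ∈ monomialSpan R ({e} + sumsOfAtLeast G t) := by
    rw [← hy, Subalgebra.coe_mul, ha]
    exact mul_mem_monomialSpan (X_pow_mem_monomialSpan rfl)
      (coe_mem_monomialSpan_of_mem_span_pow hC hS t hz)
  obtain ⟨_, rfl, _, ⟨s, hsG, hst, rfl⟩, rfl⟩ := X_pow_mem_monomialSpan_iff.1 hd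
  exact ⟨s, hsG, hst, rfl⟩

theorem mem_span_singleton_mul_pow_of_coe_eq {a x y : C} {𝔫 : Ideal C} {e d w n : ℕ}
    (ha : (a : R[X]) = X ^ e) (hx : (x : R[X]) = X ^ d) (hy : (y : R[X]) = X ^ (e * w + d))
    (ha𝔫 : a ∈ 𝔫) (hx𝔫 : x ∈ 𝔫) (hn : 0 < n) (hnw : n ≤ w) :
    y ∈ Ideal.span {a} * 𝔫 ^ n := by
  obtain ⟨n, rfl⟩ : ∃ n', n = n' + 1 := ⟨n - 1, by omega⟩
  obtain ⟨v, rfl⟩ : ∃ v, w = n + 1 + v := ⟨w - (n + 1), by omega⟩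
  have hmem : a ^ n * x ∈ 𝔫 ^ (n + 1) :=
    pow_succ 𝔫 n ▸ Ideal.mul_mem_mul (Ideal.pow_mem_pow ha𝔫 n) hx𝔫
  refine Ideal.mem_span_singleton_mul.2 ⟨a ^ v * (a ^ n * x), Ideal.mul_mem_left _ _ hmem, ?_⟩
  apply Subtype.ext
  simp only [Subalgebra.coe_mul, Subalgebra.coe_pow, ha, hx, hy, ← pow_mul, ← pow_add]
  ring_nf

end MonomialSubalgebra

section Arithmetic

theorem add_mul_le_add_mul_of_succ_le {f : ℕ → ℕ} {c a z : ℕ}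
    (hstep : ∀ n, a ≤ n → n + 1 ≤ z → f (n + 1) ≤ f n + c) {i j : ℕ} (hai : a ≤ i)
    (hij : i ≤ j) (hjz : j ≤ z) : f j + c * i ≤ f i + c * j := by
  induction j, hij using Nat.le_induction with
  | base => rfl
  | succ j hij ih =>
    have := hstep j (hai.trans hij) hjz
    have := ih (by omega)
    rw [mul_add]
    omega

theorem mul_sum_map_mod_add_card_le {e c : ℕ} {s : Multiset ℕ}
    (h : ∀ g ∈ s, c * (g % e) + 1 ≤ g / e) :
    c * (s.map (· % e)).sum + Multiset.card s ≤ (s.map (· / e)).sum := by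
  induction s using Multiset.induction_on with
  | empty => simp
  | cons g s ih =>
    simp only [Multiset.map_cons, Multiset.sum_cons, Multiset.card_cons, mul_add]
    have := h g (Multiset.mem_cons_self g s)
    have := ih fun g' hg' => h g' (Multiset.mem_cons_of_mem hg')
    omega

theorem eq_and_eq_of_mul_add_eq {e b c m K R : ℕ} (hbc : b ≤ 2 * c) (hme : m < e)
    (hRK : c * R < K) (h : e * K + R = e * (b * m) + m) : K = b * m ∧ R = m := by
  rcases lt_trichotomy K (b * m) with hK | rfl | hK
  · obtain ⟨t, ht⟩ : ∃ t, b * m = K + (t + 1) := ⟨b * m - K - 1, by omega⟩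
    have hR : R = m + e * (t + 1) := by rw [ht, mul_add] at h; omega
    have hbm : b * m ≤ c * m + c * m := by
      rw [← add_mul, ← two_mul]
      exact Nat.mul_le_mul_right m hbc
    have hcR : c * m + c * m ≤ c * R := by
      rw [hR, mul_add]
      exact Nat.add_le_add_left
        (Nat.mul_le_mul_left c (hme.le.trans (Nat.le_mul_of_pos_right e t.succ_pos))) _
    omega
  · exact ⟨rfl, by omega⟩
  · have := Nat.mul_le_mul_left e (Nat.succ_le_of_lt hK)
    rw [Nat.succ_eq_add_one, mul_add, mul_one] at this
    omega

-- `B` stands for `b_m` and `c` for `⌈b/2⌉`.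
theorem card_add_le_of_add_sum_eq {e b c m B : ℕ} {s : Multiset ℕ} (hbc : b ≤ 2 * c)
    (hme : m < e) (hweight : ∀ g ∈ s, c * (g % e) + 1 ≤ g / e)
    (hdom : ∀ g ∈ s, b * (g % e) ≤ g / e ∨ (g % e ≤ m → B + c * (g % e) ≤ g / e + c * m))
    (hsum : e + s.sum = (b * e + 1) * m) : Multiset.card s + B ≤ b * m := by
  have hcard := mul_sum_map_mod_add_card_le hweight
  have hsplit : s.sum = e * (s.map (· / e)).sum + (s.map (· % e)).sum := by
    conv_lhs => rw [← Multiset.map_id' s]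
    simp only [← Multiset.sum_map_mul_left, ← Multiset.sum_map_add, Nat.div_add_mod]
  set K := (s.map (· / e)).sum
  set R := (s.map (· % e)).sum
  obtain ⟨hK, hR⟩ : 1 + K = b * m ∧ R = m :=
    eq_and_eq_of_mul_add_eq hbc hme (by omega)
      (by rw [mul_add, mul_one, add_assoc, ← hsplit, hsum]; ring)
  by_cases hall : ∀ g ∈ s, b * (g % e) ≤ g / e
  · have hbR : b * R ≤ K := by
      simpa only [Multiset.sum_map_mul_left] using Multiset.sum_map_le_sum_map _ _ hall
    rw [hR] at hbR
    omega
  push Not at hall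
  obtain ⟨g, hg, hlt⟩ := hall
  have hgR : g % e ≤ R := Multiset.le_sum_of_mem (Multiset.mem_map_of_mem (· % e) hg)
  have hgB := (hdom g hg).resolve_left hlt.not_ge (hR ▸ hgR)
  obtain ⟨s', rfl⟩ := Multiset.exists_cons_of_mem hg
  have hcard' :=
    mul_sum_map_mod_add_card_le fun g' hg' => hweight g' (Multiset.mem_cons_of_mem hg')
  simp only [K, R, Multiset.map_cons, Multiset.sum_cons, Multiset.card_cons] at hK hR hcard' ⊢
  rw [← hR, mul_add] at hgB
  omega

end Arithmetic

section GeneratorExponents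

def generatorExponents (b e ℓ : ℕ) (bf : ℕ → ℕ) : Set ℕ :=
  {e, b * e + 1} ∪ (fun n => bf n * e + n) '' Set.Icc (ℓ + 1) (e - 1)

variable {b e ℓ : ℕ} {bf : ℕ → ℕ} {g : ℕ}

theorem div_mod_of_mem_generatorExponents (he : 2 ≤ e) (hg : g ∈ generatorExponents b e ℓ bf) :
    (g / e = 1 ∧ g % e = 0) ∨ (g / e = b ∧ g % e = 1) ∨
      ∃ j ∈ Set.Icc (ℓ + 1) (e - 1), g / e = bf j ∧ g % e = j := by
  have hdm : ∀ {q r}, r < e → (q * e + r) / e = q ∧ (q * e + r) % e = r := fun hr =>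
    (Nat.div_mod_unique (by omega)).2 ⟨by ring, hr⟩
  rcases hg with (rfl | rfl) | ⟨j, hj, rfl⟩
  · exact Or.inl ⟨Nat.div_self (by omega), Nat.mod_self g⟩
  · exact Or.inr (Or.inl (hdm (by omega)))
  · exact Or.inr (Or.inr ⟨j, hj, hdm (by have := hj.2; omega)⟩)

theorem mul_mod_add_one_le_div_of_mem_generatorExponents (hb : 2 ≤ b) (he : 2 ≤ e)
    (hlow : ∀ n, ℓ + 1 ≤ n → n ≤ e - 1 → (b + 1) / 2 * n + 1 ≤ bf n)
    (hg : g ∈ generatorExponents b e ℓ bf) : (b + 1) / 2 * (g % e) + 1 ≤ g / e := by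
  rcases div_mod_of_mem_generatorExponents he hg with ⟨hq, hr⟩ | ⟨hq, hr⟩ | ⟨j, hj, hq, hr⟩
  · rw [hq, hr]; omega
  · rw [hq, hr]; omega
  · rw [hq, hr]; exact hlow j hj.1 hj.2

theorem mul_mod_le_div_or_of_mem_generatorExponents {m : ℕ} (hm1 : ℓ + 1 ≤ m) (hm2 : m ≤ e - 1)
    (hstep : ∀ n, ℓ + 1 ≤ n → n ≤ e - 2 → bf (n + 1) ≤ bf n + (b + 1) / 2)
    (hg : g ∈ generatorExponents b e ℓ bf) :
    b * (g % e) ≤ g / e ∨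
      (g % e ≤ m → bf m + (b + 1) / 2 * (g % e) ≤ g / e + (b + 1) / 2 * m) := by
  rcases div_mod_of_mem_generatorExponents (by omega) hg with ⟨hq, hr⟩ | ⟨hq, hr⟩ | ⟨j, hj, hq, hr⟩
  · left; rw [hq, hr]; omega
  · left; rw [hq, hr, mul_one]
  · right; rw [hq, hr]
    exact fun hjm =>
      add_mul_le_add_mul_of_succ_le (fun n h1 h2 => hstep n h1 (by omega)) hj.1 hjm hm2

end GeneratorExponents

theorem semigroup_ring_power_membership_criterion_general {k : Type*} [Field k] (b e ℓ : ℕ) (bf : ℕ → ℕ)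
    (hb : 2 ≤ b)
    (hlow : ∀ n, ℓ + 1 ≤ n → n ≤ e - 1 → (b + 1) / 2 * n + 1 ≤ bf n)
    (hstep : ∀ n, ℓ + 1 ≤ n → n ≤ e - 2 → bf (n + 1) ≤ bf n + (b + 1) / 2)
    (C : Subalgebra k (Polynomial k))
    (hC : C = Algebra.adjoin k
      ({Polynomial.X ^ e, Polynomial.X ^ (b * e + 1)} ∪
        (fun n => (Polynomial.X : Polynomial k) ^ (bf n * e + n)) '' Set.Icc (ℓ + 1) (e - 1)))
    (a a1 : C) (av : ℕ → C)
    (ha : (a : Polynomial k) = Polynomial.X ^ e)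
    (ha1 : (a1 : Polynomial k) = Polynomial.X ^ (b * e + 1))
    (hav : ∀ n, ℓ + 1 ≤ n → n ≤ e - 1 →
      (av n : Polynomial k) = Polynomial.X ^ (bf n * e + n))
    (q 𝔫 : Ideal C)
    (hq : q = Ideal.span {a})
    (h𝔫 : 𝔫 = Ideal.span ({a, a1} ∪ av '' Set.Icc (ℓ + 1) (e - 1)))
    (m n : ℕ) (hn : 0 < n) (hm1 : ℓ + 1 ≤ m) (hm2 : m ≤ e - 1) :
    bf m ≤ b * m - n ↔ a1 ^ m ∈ q * 𝔫 ^ n := by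
  have ha1m : ((a1 ^ m : C) : k[X]) = X ^ ((b * e + 1) * m) := by
    rw [Subalgebra.coe_pow, ha1, ← pow_mul]
  have hme : m < e := by omega
  subst hq h𝔫
  constructor
  · intro hle
    obtain ⟨w, hw⟩ : ∃ w, b * m = bf m + w := ⟨b * m - bf m, by omega⟩
    -- `b * m - n` truncates; `0 < bf m` (from `hlow`) excludes the junk case `b * m < n`.
    have hnw : n ≤ w := by have := hlow m hm1 hm2; rw [hw] at hle; omega
    refine mem_span_singleton_mul_pow_of_coe_eq (w := w) ha (hav m hm1 hm2) ?_
      (Ideal.subset_span (by simp)) (Ideal.subset_span (Or.inr ⟨m, ⟨hm1, hm2⟩, rfl⟩)) hn hnw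
    rw [ha1m]
    congr 1
    linear_combination e * hw
  · intro hmem
    have hGC : C = Algebra.adjoin k ((X ^ ·) '' generatorExponents b e ℓ bf) := by
      rw [hC, generatorExponents, Set.image_union, Set.image_pair, Set.image_image]
    have hgens : ∀ x ∈ ({a, a1} ∪ av '' Set.Icc (ℓ + 1) (e - 1)),
        ∃ g ∈ generatorExponents b e ℓ bf, (x : k[X]) = X ^ g := by
      rintro _ ((rfl | rfl) | ⟨j, hj, rfl⟩)
      exacts [⟨e, by simp [generatorExponents], ha⟩, ⟨_, by simp [generatorExponents], ha1⟩,
        ⟨_, Or.inr ⟨j, hj, rfl⟩, hav j hj.1 hj.2⟩]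
    obtain ⟨s, hsG, hns, hsum⟩ :=
      exists_multiset_of_mem_span_singleton_mul_span_pow hGC.le hgens ha ha1m hmem
    have := card_add_le_of_add_sum_eq (by omega) hme
      (fun g hg => mul_mod_add_one_le_div_of_mem_generatorExponents hb (by omega) hlow (hsG g hg))
      (fun g hg => mul_mod_le_div_or_of_mem_generatorExponents hm1 hm2 hstep (hsG g hg)) hsum
    omega

theorem semigroup_ring_power_membership_criterion {k : Type*} [Field k] (b e ℓ : ℕ) (bf : ℕ → ℕ)
    (hb : 2 ≤ b) (hℓ2 : 2 ≤ ℓ) (hℓe : ℓ ≤ e - 1)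
    (hb1 : bf 1 = b)
    (hlow : ∀ n, ℓ + 1 ≤ n → n ≤ e - 1 → (b + 1) / 2 * n + 1 ≤ bf n)
    (hfirst : bf (ℓ + 1) ≤ b * ℓ + b - 1)
    (hstep : ∀ n, ℓ + 1 ≤ n → n ≤ e - 2 → bf (n + 1) ≤ bf n + (b + 1) / 2)
    (C : Subalgebra k (Polynomial k))
    (hC : C = Algebra.adjoin k
      ({Polynomial.X ^ e, Polynomial.X ^ (b * e + 1)} ∪
        (fun n => (Polynomial.X : Polynomial k) ^ (bf n * e + n)) '' Set.Icc (ℓ + 1) (e - 1)))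
    (a a1 : C) (av : ℕ → C)
    (ha : (a : Polynomial k) = Polynomial.X ^ e)
    (ha1 : (a1 : Polynomial k) = Polynomial.X ^ (b * e + 1))
    (hav : ∀ n, ℓ + 1 ≤ n → n ≤ e - 1 →
      (av n : Polynomial k) = Polynomial.X ^ (bf n * e + n))
    (q 𝔫 : Ideal C)
    (hq : q = Ideal.span {a})
    (h𝔫 : 𝔫 = Ideal.span ({a, a1} ∪ av '' Set.Icc (ℓ + 1) (e - 1)))
    (m n : ℕ) (hn : 0 < n) (hnm : n < m) (hm1 : ℓ + 1 ≤ m) (hm2 : m ≤ e - 1) :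
    bf m ≤ b * m - n ↔ a1 ^ m ∈ q * 𝔫 ^ n :=
  semigroup_ring_power_membership_criterion_general b e ℓ bf hb hlow hstep C hC a a1 av ha ha1 hav q
    𝔫 hq h𝔫 m n hn hm1 hm2
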